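/- arXiv:2505.14808 — 3 statements merged into one kernel-verified Lean document; each statement's English description precedes it below -/
import Mathlib

section
/- For the test risk function R(θ, n, m) := (r·n²/(m·(n+1+r+σ²)²) + 1)·(r+σ²) − 2·r·n·cos²(θ)/(n+1+r+σ²) + (m+1)·r·n²·cos²(θ)/(m·(n+1+r+σ²)²), the limit as n → ∞ followed by m → ∞ equals r·sin²(θ) + σ². -/
/-!
Put `t = n / (n + c)` with `c = 1 + r + σ²`. For fixed `m` the risk is the quadratic
`(r + σ²) - 2 r cos²θ t + r (r + σ² + (m + 1) cos²θ) / m · t²` in `t`, and `t → 1` as `n → ∞`,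
so the inner limit is `r sin²θ + σ² + r (r + σ² + cos²θ) / m`, whose excess over
`r sin²θ + σ²` is `O(1 / m)`.
-/

open Filter Topology

lemma tendsto_div_add_const_atTop (c : ℝ) :
    Tendsto (fun x : ℝ => x / (x + c)) atTop (𝓝 1) := by
  have h : Tendsto (fun x : ℝ => 1 - c / (x + c)) atTop (𝓝 (1 - 0)) :=
    tendsto_const_nhds.sub ((tendsto_atTop_add_const_right _ c tendsto_id).const_div_atTop c)
  rw [sub_zero] at h
  refine h.congr' ?_
  filter_upwards [eventually_gt_atTop (-c)] with x hx
  have hxc : x + c ≠ 0 := by linarith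
  field_simp
  ring

lemma tendsto_risk_atTop (r σ C : ℝ) {m : ℝ} (hm : m ≠ 0) :
    Tendsto (fun n : ℝ => (r * n ^ 2 / (m * (n + 1 + r + σ ^ 2) ^ 2) + 1) * (r + σ ^ 2)
        - 2 * r * n * C / (n + 1 + r + σ ^ 2)
        + (m + 1) * r * n ^ 2 * C / (m * (n + 1 + r + σ ^ 2) ^ 2)) atTop
      (𝓝 (r + σ ^ 2 - r * C + r * (r + σ ^ 2 + C) / m)) := by
  set c : ℝ := 1 + r + σ ^ 2
  have hquadratic : Tendsto (fun t : ℝ => r + σ ^ 2 - 2 * r * C * t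
      + r * (r + σ ^ 2 + (m + 1) * C) / m * t ^ 2) (𝓝 1)
      (𝓝 (r + σ ^ 2 - r * C + r * (r + σ ^ 2 + C) / m)) := by
    convert (by fun_prop : Continuous fun t : ℝ => r + σ ^ 2 - 2 * r * C * t
      + r * (r + σ ^ 2 + (m + 1) * C) / m * t ^ 2).tendsto 1 using 2
    field_simp
    ring
  refine (hquadratic.comp (tendsto_div_add_const_atTop c)).congr' ?_
  filter_upwards [eventually_gt_atTop (-c)] with n hn
  have hnc : n + c ≠ 0 := by linarith
  have hshift : n + 1 + r + σ ^ 2 = n + c := by ring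
  simp only [Function.comp_apply, hshift]
  field_simp
  ring

theorem stmt13_general (r : ℕ) (σ : ℝ)
    (θ : ℝ)
    (R : ℝ → ℝ → ℝ)
    (hR : ∀ n m, R n m =
      ((r : ℝ) * n ^ 2 / (m * (n + 1 + r + σ ^ 2) ^ 2) + 1) * (r + σ ^ 2)
        - 2 * r * n * Real.cos θ ^ 2 / (n + 1 + r + σ ^ 2)
        + (m + 1) * r * n ^ 2 * Real.cos θ ^ 2 / (m * (n + 1 + r + σ ^ 2) ^ 2)) :
    ∃ g : ℝ → ℝ,
      (∀ m > 0, Tendsto (fun n => R n m) atTop (nhds (g m))) ∧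
        Tendsto g atTop (nhds ((r : ℝ) * Real.sin θ ^ 2 + σ ^ 2)) := by
  refine ⟨fun m => r * Real.sin θ ^ 2 + σ ^ 2 + r * (r + σ ^ 2 + Real.cos θ ^ 2) / m,
    fun m hm => ?_, ?_⟩
  · simp_rw [hR]
    convert tendsto_risk_atTop r σ (Real.cos θ ^ 2) hm.ne' using 2
    rw [Real.sin_sq]
    ring
  · simpa using tendsto_const_nhds.add
      ((tendsto_id (α := ℝ)).const_div_atTop (r * (r + σ ^ 2 + Real.cos θ ^ 2)))

theorem stmt13 (r : ℕ) (hr : 1 ≤ r) (σ : ℝ) (hσ : 0 ≤ σ)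
    (θ : ℝ) (hθ : θ ∈ Set.Icc 0 (Real.pi / 2))
    (R : ℝ → ℝ → ℝ)
    (hR : ∀ n m, R n m =
      ((r : ℝ) * n ^ 2 / (m * (n + 1 + r + σ ^ 2) ^ 2) + 1) * (r + σ ^ 2)
        - 2 * r * n * Real.cos θ ^ 2 / (n + 1 + r + σ ^ 2)
        + (m + 1) * r * n ^ 2 * Real.cos θ ^ 2 / (m * (n + 1 + r + σ ^ 2) ^ 2)) :
    ∃ g : ℝ → ℝ,
      (∀ m > 0, Tendsto (fun n => R n m) atTop (nhds (g m))) ∧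
        Tendsto g atTop (nhds ((r : ℝ) * Real.sin θ ^ 2 + σ ^ 2)) :=
  stmt13_general r σ θ R hR
end

section
/- Define h(n, m) := r + σ² + ((m+1+2(r+σ²))/m)·(r·n²/(n+1+2(r+σ²))²) − 2·r·n/(n+1+2(r+σ²)). For all real m ≥ n > 0, h(n, m) ≤ r + σ² − r·n/(n+1+2(r+σ²)). -/
theorem stmt16 (r σ n m : ℝ) (hr : 0 < r) (hσ : 0 ≤ σ)
    (hn : 0 < n) (hmn : n ≤ m) :
    r + σ ^ 2
        + ((m + 1 + 2 * (r + σ ^ 2)) / m) *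
            (r * n ^ 2 / (n + 1 + 2 * (r + σ ^ 2)) ^ 2)
        - 2 * r * n / (n + 1 + 2 * (r + σ ^ 2))
      ≤ r + σ ^ 2 - r * n / (n + 1 + 2 * (r + σ ^ 2)) := by
  have hm : 0 < m := lt_of_lt_of_le hn hmn
  have hd : 0 < n + 1 + 2 * (r + σ ^ 2) := by positivity
  have key : ((m + 1 + 2 * (r + σ ^ 2)) / m) *
      (r * n ^ 2 / (n + 1 + 2 * (r + σ ^ 2)) ^ 2)
      ≤ r * n / (n + 1 + 2 * (r + σ ^ 2)) := by
    rw [div_mul_div_comm, div_le_div_iff₀ (by positivity) hd]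
    nlinarith [mul_pos hr hn, mul_pos (mul_pos hr hn) hd,
      mul_nonneg (mul_nonneg (mul_pos (mul_pos hr hn) hd).le
        (sub_nonneg.2 hmn)) (by positivity : (0:ℝ) ≤ 1 + 2 * (r + σ ^ 2))]
  have h2 : 2 * r * n / (n + 1 + 2 * (r + σ ^ 2))
      = r * n / (n + 1 + 2 * (r + σ ^ 2)) + r * n / (n + 1 + 2 * (r + σ ^ 2)) := by
    ring
  linarith
end

section
/- Let Σ_s = U_s U_sᵀ + ε I_d with U_s ∈ ℝ^{d×r} having orthonormal columns and ε > 0, and let M_s = Tr(Σ_s) + σ² and A = ((n+1)/n · I_d + (M_s/n) · Σ_s⁻¹)⁻¹ for a positive integer n. Then the optimal in-distribution risk L* := M_s − Tr(Σ_s A) satisfies lim_{ε→0} L* = r + σ² − rn/(n+1+r+σ²), i.e., lim_{ε→0}(M_s − Tr(Σ_s A)) = r + σ² − rn/(n+1+r+σ²). -/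
set_option maxHeartbeats 800000
set_option linter.all false
open Matrix Filter

lemma mulPI {d : ℕ} (P : Matrix (Fin d) (Fin d) ℝ) (hP : P * P = P) (a b c e : ℝ) :
    (a • P + b • (1 : Matrix (Fin d) (Fin d) ℝ)) * (c • P + e • 1)
      = (a*c + a*e + b*c) • P + (b*e) • 1 := by
  simp only [add_mul, mul_add, smul_mul_assoc, mul_smul_comm, hP, mul_one, one_mul, smul_smul]
  module

lemma invPI {d : ℕ} (P : Matrix (Fin d) (Fin d) ℝ) (hP : P * P = P) (a b : ℝ)
    (hb : b ≠ 0) (hab : a + b ≠ 0) :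
    (a • P + b • (1 : Matrix (Fin d) (Fin d) ℝ))⁻¹ = (-a/(b*(a+b))) • P + b⁻¹ • 1 := by
  apply Matrix.inv_eq_right_inv
  rw [mulPI P hP]
  have h1 : a * (-a/(b*(a+b))) + a * b⁻¹ + b * (-a/(b*(a+b))) = 0 := by field_simp; ring
  rw [h1, mul_inv_cancel₀ hb]
  simp

lemma trPI {d : ℕ} (P : Matrix (Fin d) (Fin d) ℝ) (a b : ℝ) :
    (a • P + b • (1 : Matrix (Fin d) (Fin d) ℝ)).trace = a * P.trace + b * d := by
  simp [Matrix.trace_add, Matrix.trace_smul, Matrix.trace_one, smul_eq_mul]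

theorem stmt18 {d r n : ℕ} (hr : 1 ≤ r) (hd : r < d) (hn : 1 ≤ n)
    (σ : ℝ) (hσ : 0 ≤ σ)
    (Us : Matrix (Fin d) (Fin r) ℝ) (hUs : Usᵀ * Us = 1) :
    Tendsto
      (fun ε : ℝ =>
        (((Us * Usᵀ + ε • (1 : Matrix (Fin d) (Fin d) ℝ)).trace + σ ^ 2)
          - ((Us * Usᵀ + ε • (1 : Matrix (Fin d) (Fin d) ℝ)) *
              ((((n : ℝ) + 1) / (n : ℝ)) • (1 : Matrix (Fin d) (Fin d) ℝ)
                + ((((Us * Usᵀ + ε • (1 : Matrix (Fin d) (Fin d) ℝ)).trace + σ ^ 2)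
                    / (n : ℝ)) •
                  (Us * Usᵀ + ε • (1 : Matrix (Fin d) (Fin d) ℝ))⁻¹))⁻¹).trace))
      (nhdsWithin 0 (Set.Ioi 0))
      (nhds ((r : ℝ) + σ ^ 2 - (r : ℝ) * n / ((n : ℝ) + 1 + r + σ ^ 2))) := by
  have hr0 : (0:ℝ) < r := by exact_mod_cast hr
  have hn0 : (0:ℝ) < n := by exact_mod_cast hn
  set g : ℝ → ℝ := fun ε =>
    ((r:ℝ) + ε*d + σ^2)
      - ((r:ℝ) * ((n:ℝ)*(1+ε)^2/(((n:ℝ)+1)*(1+ε)+((r:ℝ)+ε*d+σ^2))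
            - (n:ℝ)*ε^2/(((n:ℝ)+1)*ε+((r:ℝ)+ε*d+σ^2)))
        + (d:ℝ) * ((n:ℝ)*ε^2/(((n:ℝ)+1)*ε+((r:ℝ)+ε*d+σ^2)))) with hgdef
  have hD10 : ((n:ℝ)+1)*(1+(0:ℝ))+((r:ℝ)+(0:ℝ)*d+σ^2) ≠ 0 := by positivity
  have hD20 : ((n:ℝ)+1)*(0:ℝ)+((r:ℝ)+(0:ℝ)*d+σ^2) ≠ 0 := by
    have : ((n:ℝ)+1)*(0:ℝ)+((r:ℝ)+(0:ℝ)*d+σ^2) = (r:ℝ) + σ^2 := by ring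
    rw [this]
    nlinarith [sq_nonneg σ]
  have hc : ContinuousAt g 0 := by
    apply ContinuousAt.sub
    · fun_prop
    · apply ContinuousAt.add
      · apply ContinuousAt.mul continuousAt_const
        apply ContinuousAt.sub
        · exact ContinuousAt.div (by fun_prop) (by fun_prop) hD10
        · exact ContinuousAt.div (by fun_prop) (by fun_prop) hD20
      · exact ContinuousAt.mul continuousAt_const
          (ContinuousAt.div (by fun_prop) (by fun_prop) hD20)
  have hg0 : g 0 = (r : ℝ) + σ ^ 2 - (r : ℝ) * n / ((n : ℝ) + 1 + r + σ ^ 2) := by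
    rw [hgdef]
    have h1 : ((n:ℝ)+1)*(1+(0:ℝ))+((r:ℝ)+(0:ℝ)*d+σ^2) = (n:ℝ) + 1 + r + σ^2 := by ring
    simp only
    rw [h1]
    norm_num
    ring
  have hg : Tendsto g (nhdsWithin 0 (Set.Ioi 0))
      (nhds ((r : ℝ) + σ ^ 2 - (r : ℝ) * n / ((n : ℝ) + 1 + r + σ ^ 2))) := by
    rw [← hg0]
    exact tendsto_nhdsWithin_of_tendsto_nhds hc.tendsto
  apply hg.congr'
  filter_upwards [self_mem_nhdsWithin] with ε hε
  symm
  have hε0 : (0:ℝ) < ε := hε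
  set P := Us * Usᵀ with hPdef
  have hP : P * P = P := by
    rw [hPdef, Matrix.mul_assoc, ← Matrix.mul_assoc Usᵀ, hUs, Matrix.one_mul]
  have htrP : P.trace = r := by
    rw [hPdef, Matrix.trace_mul_comm, hUs, Matrix.trace_one]
    simp
  set M : ℝ := (r:ℝ) + ε*d + σ^2 with hMdef
  have hM : 0 < M := by
    have h1 : 0 ≤ ε * d := mul_nonneg hε0.le (Nat.cast_nonneg d)
    have h2 : 0 ≤ σ^2 := sq_nonneg σ
    rw [hMdef]; linarith
  have h1ε : (0:ℝ) < 1 + ε := by linarith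
  have htr : (P + ε • (1 : Matrix (Fin d) (Fin d) ℝ)).trace = (r:ℝ) + ε*d := by
    rw [Matrix.trace_add, Matrix.trace_smul, Matrix.trace_one, htrP]
    simp [smul_eq_mul]
  have hSform : P + ε • (1 : Matrix (Fin d) (Fin d) ℝ) = (1:ℝ) • P + ε • 1 := by
    rw [one_smul]
  have hSinv : (P + ε • (1 : Matrix (Fin d) (Fin d) ℝ))⁻¹
      = (-1/(ε*(1+ε))) • P + ε⁻¹ • 1 := by
    rw [hSform, invPI P hP 1 ε hε0.ne' (by linarith)]
  set aB : ℝ := M/(n:ℝ) * (-1/(ε*(1+ε))) with haBdef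
  set bB : ℝ := ((n:ℝ)+1)/(n:ℝ) + M/(n:ℝ) * ε⁻¹ with hbBdef
  have hbB : 0 < bB := by
    rw [hbBdef]
    have : 0 < ((n:ℝ)+1)/(n:ℝ) := by positivity
    have : 0 < M/(n:ℝ) * ε⁻¹ := by positivity
    linarith
  have habval : aB + bB = (((n:ℝ)+1)*(1+ε)+M)/((n:ℝ)*(1+ε)) := by
    rw [haBdef, hbBdef]
    field_simp
    ring
  have hab0 : 0 < aB + bB := by
    rw [habval]
    have hnum : 0 < ((n:ℝ)+1)*(1+ε)+M := by nlinarith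
    positivity
  have hInner : (((n:ℝ)+1)/(n:ℝ)) • (1 : Matrix (Fin d) (Fin d) ℝ)
      + (M/(n:ℝ)) • (P + ε • (1 : Matrix (Fin d) (Fin d) ℝ))⁻¹
      = aB • P + bB • 1 := by
    rw [hSinv, haBdef, hbBdef]
    module
  have hInnerInv : (aB • P + bB • (1 : Matrix (Fin d) (Fin d) ℝ))⁻¹
      = (-aB/(bB*(aB+bB))) • P + bB⁻¹ • 1 :=
    invPI P hP aB bB hbB.ne' hab0.ne'
  set D1 : ℝ := ((n:ℝ)+1)*(1+ε)+M with hD1def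
  set D2 : ℝ := ((n:ℝ)+1)*ε+M with hD2def
  have hD1 : 0 < D1 := by
    rw [hD1def]
    have h := mul_pos (by linarith : (0:ℝ) < (n:ℝ)+1) h1ε
    linarith
  have hD2 : 0 < D2 := by
    rw [hD2def]
    have h := mul_pos (by linarith : (0:ℝ) < (n:ℝ)+1) hε0
    linarith
  have hcP : 1 * (-aB/(bB*(aB+bB))) + 1 * bB⁻¹ + ε * (-aB/(bB*(aB+bB)))
      = (n:ℝ)*(1+ε)^2/D1 - (n:ℝ)*ε^2/D2 := by
    have hbBval : bB = D2/((n:ℝ)*ε) := by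
      rw [hbBdef, hD2def]; field_simp
    have habv : aB + bB = D1/((n:ℝ)*(1+ε)) := by rw [habval, hD1def]
    rw [habv, hbBval, haBdef, hD1def, hD2def]
    field_simp
    ring
  have hcI : ε * bB⁻¹ = (n:ℝ)*ε^2/D2 := by
    have hbBval : bB = D2/((n:ℝ)*ε) := by
      rw [hbBdef, hD2def]; field_simp
    rw [hbBval]
    field_simp
  show ((P + ε • (1 : Matrix (Fin d) (Fin d) ℝ)).trace + σ ^ 2)
      - ((P + ε • (1 : Matrix (Fin d) (Fin d) ℝ)) *
          ((((n:ℝ)+1)/(n:ℝ)) • (1 : Matrix (Fin d) (Fin d) ℝ)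
            + (((P + ε • (1 : Matrix (Fin d) (Fin d) ℝ)).trace + σ^2)/(n:ℝ)) •
              (P + ε • (1 : Matrix (Fin d) (Fin d) ℝ))⁻¹)⁻¹).trace = g ε
  rw [htr]
  have hM' : ((r:ℝ) + ε*d + σ^2) = M := hMdef.symm
  rw [show ((r:ℝ) + ε*↑d + σ^2)/(n:ℝ) = M/(n:ℝ) by rw [hMdef]]
  rw [hInner, hInnerInv, hSform, mulPI P hP, trPI, htrP]
  rw [hcP, hcI]
  rw [hgdef]
  simp only [hD1def, hD2def, hMdef]
  ring
end
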